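/- Let Γ be a submonoid of Λ⁺ that is G-saturated, i.e., ℤΓ ∩ Λ⁺ = Γ. Then for every simple root σ ∈ S with σ ∈ ℤΓ, the set a(σ) contains at most one element. (This is Proposition 2.21 of the paper, whose proof shows the contrapositive: if a(σ) contains two distinct elements for some simple root σ ∈ ℤΓ, then there exists a dominant weight in ℤΓ that does not belong to Γ.) -/
import Mathlib


/-- The set `ℚ≥0 X` of finite nonnegative rational combinations of elements of `X`. -/
def qCone {V : Type*} [AddCommGroup V] [Module ℚ V] (X : Set V) : Set V :=
  {y | ∃ (T : Finset V) (c : V → ℚ), ↑T ⊆ X ∧ (∀ x ∈ T, 0 ≤ c x) ∧ y = ∑ x ∈ T, c x • x}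

/-- The set of dominant weights `Λ⁺ = {λ ∈ Λ : ⟨α^∨, λ⟩ ≥ 0 for all α ∈ S}`. -/
def dominant {V : Type*} [AddCommGroup V] [Module ℚ V]
    (S : Finset V) (coroot : V → V →ₗ[ℚ] ℚ) (Λ : AddSubgroup V) : Set V :=
  {v | v ∈ Λ ∧ ∀ α ∈ S, 0 ≤ coroot α v}

/-- A `ℚ`-linear functional on the `ℚ`-span of `Γ` belongs to `Hom(ℤΓ, ℤ)` if it takes
integer values on `ℤΓ`.  (Since `ℤΓ` spans `ℚ ⊗ ℤΓ`, restriction identifies such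
functionals with `Hom(ℤΓ, ℤ)`.) -/
def isIntegralOn {V : Type*} [AddCommGroup V] [Module ℚ V] (Γ : AddSubmonoid V)
    (δ : (Submodule.span ℚ (Γ : Set V)) →ₗ[ℚ] ℚ) : Prop :=
  ∀ x : Submodule.span ℚ (Γ : Set V), (x : V) ∈ AddSubgroup.closure (Γ : Set V) → ∃ n : ℤ, δ x = n

/-- The set `E(Γ)`: elements `δ ∈ Hom(ℤΓ, ℤ)` which are primitive (not of the form `nδ'`
with `δ' ∈ Hom(ℤΓ, ℤ)` and `n ≥ 2`), satisfy `δ(Γ) ⊆ ℕ`, and are the equation of a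
codimension-one face of the cone `ℚ≥0 Γ`, i.e. `{x ∈ ℚ≥0Γ : δ(x) = 0}` spans a hyperplane
of `ℚ ⊗ ℤΓ`. -/
def Eset {V : Type*} [AddCommGroup V] [Module ℚ V] [FiniteDimensional ℚ V]
    (Γ : AddSubmonoid V) : Set ((Submodule.span ℚ (Γ : Set V)) →ₗ[ℚ] ℚ) :=
  {δ | isIntegralOn Γ δ ∧
    (¬ ∃ (n : ℤ) (δ' : (Submodule.span ℚ (Γ : Set V)) →ₗ[ℚ] ℚ),
        2 ≤ n ∧ isIntegralOn Γ δ' ∧ δ = (n : ℚ) • δ') ∧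
    (∀ x : Submodule.span ℚ (Γ : Set V), (x : V) ∈ Γ → ∃ n : ℕ, δ x = n) ∧
    Module.finrank ℚ
        (Submodule.span ℚ {x : Submodule.span ℚ (Γ : Set V) | (x : V) ∈ qCone (Γ : Set V) ∧ δ x = 0}) + 1
      = Module.finrank ℚ (Submodule.span ℚ (Γ : Set V))}

/-- The set `a(α) = {δ ∈ Hom(ℤΓ,ℤ) : δ(α) = 1 and (δ ∈ E(Γ) or α^∨|_{ℤΓ} − δ ∈ E(Γ))}`,
for a simple root `α ∈ ℤΓ`. -/
def aset {V : Type*} [AddCommGroup V] [Module ℚ V] [FiniteDimensional ℚ V]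
    (Γ : AddSubmonoid V) (coroot : V → V →ₗ[ℚ] ℚ) (σ : V) :
    Set ((Submodule.span ℚ (Γ : Set V)) →ₗ[ℚ] ℚ) :=
  {δ | isIntegralOn Γ δ ∧ (∀ x : Submodule.span ℚ (Γ : Set V), (x : V) = σ → δ x = 1) ∧
    (δ ∈ Eset Γ ∨ (coroot σ).domRestrict (Submodule.span ℚ (Γ : Set V)) - δ ∈ Eset Γ)}

lemma coroot_eq_two_smul
    {V : Type*} [AddCommGroup V] [Module ℚ V] [FiniteDimensional ℚ V]
    (S : Finset V) (coroot : V → V →ₗ[ℚ] ℚ) (Λ : AddSubgroup V)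
    (hint : ∀ α ∈ S, ∀ lam ∈ Λ, ∃ n : ℤ, coroot α lam = n)
    (hself : ∀ α ∈ S, coroot α α = 2)
    (hoffdiag : ∀ α ∈ S, ∀ β ∈ S, α ≠ β → coroot α β ≤ 0)
    (Γ : AddSubmonoid V)
    (hΓdom : (Γ : Set V) ⊆ dominant S coroot Λ)
    (hsat : (AddSubgroup.closure (Γ : Set V) : Set V) ∩ dominant S coroot Λ = (Γ : Set V))
    (σ : V) (hσS : σ ∈ S) (hσZ : σ ∈ AddSubgroup.closure (Γ : Set V))
    (hσM : σ ∈ Submodule.span ℚ (Γ : Set V))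
    (ε : (Submodule.span ℚ (Γ : Set V)) →ₗ[ℚ] ℚ) (hε : ε ∈ Eset Γ)
    (hεσ : ε ⟨σ, hσM⟩ = 1) :
    (coroot σ).domRestrict (Submodule.span ℚ (Γ : Set V)) = (2:ℚ) • ε := by
  have hΓM : (Γ : Set V) ⊆ (Submodule.span ℚ (Γ : Set V) : Set V) := Submodule.subset_span
  have hΓΛ : (Γ : Set V) ⊆ (Λ : Set V) := fun x hx => (hΓdom hx).1
  have hclΛ : ∀ x ∈ AddSubgroup.closure (Γ : Set V), x ∈ Λ :=
    fun x hx => ((AddSubgroup.closure_le _).mpr hΓΛ) hx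
  -- Step A
  have stepA : ∀ γ (hγ : γ ∈ Γ), ε ⟨γ, hΓM hγ⟩ = 0 → coroot σ γ = 0 := by
    intro γ hγ hεγ
    obtain ⟨n, hn⟩ := hint σ hσS γ (hΓΛ hγ)
    have hγdom := hΓdom hγ
    have hn0 : (0:ℚ) ≤ (n:ℚ) := by rw [← hn]; exact hγdom.2 σ hσS
    have hlamZ : (2:ℚ) • γ - (n:ℚ) • σ ∈ AddSubgroup.closure (Γ : Set V) := by
      have h2γ : (2:ℚ) • γ = γ + γ := two_smul ℚ γ
      have hnσ : (n:ℚ) • σ = n • σ := Int.cast_smul_eq_zsmul ℚ n σ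
      rw [h2γ, hnσ]
      exact sub_mem (add_mem (AddSubgroup.subset_closure hγ) (AddSubgroup.subset_closure hγ))
        (zsmul_mem hσZ n)
    have hlamdom : (2:ℚ) • γ - (n:ℚ) • σ ∈ dominant S coroot Λ := by
      refine ⟨hclΛ _ hlamZ, fun α hα => ?_⟩
      have hval : coroot α ((2:ℚ) • γ - (n:ℚ) • σ) = 2 * coroot α γ - n * coroot α σ := by
        simp [map_sub, map_smul, smul_eq_mul]
      rw [hval]
      rcases eq_or_ne α σ with rfl | hne
      · rw [hself α hσS, hn]; ring_nf; linarith
      · have h1 : 0 ≤ coroot α γ := hγdom.2 α hα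
        have h2 : coroot α σ ≤ 0 := hoffdiag α hα σ hσS hne
        nlinarith
    have hlamΓ : (2:ℚ) • γ - (n:ℚ) • σ ∈ Γ := by
      have hmem : (2:ℚ) • γ - (n:ℚ) • σ ∈
          ((AddSubgroup.closure (Γ : Set V) : Set V) ∩ dominant S coroot Λ) := ⟨hlamZ, hlamdom⟩
      rwa [hsat] at hmem
    obtain ⟨k, hk⟩ := hε.2.2.1 ⟨_, hΓM hlamΓ⟩ hlamΓ
    have hdecomp : (⟨(2:ℚ) • γ - (n:ℚ) • σ, hΓM hlamΓ⟩ : Submodule.span ℚ (Γ : Set V))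
        = (2:ℚ) • (⟨γ, hΓM hγ⟩ : Submodule.span ℚ (Γ : Set V)) - (n:ℚ) • ⟨σ, hσM⟩ := rfl
    rw [hdecomp, map_sub, map_smul, map_smul, hεγ, hεσ] at hk
    have hk0 : (0:ℚ) ≤ (k:ℚ) := Nat.cast_nonneg k
    have hzero : (n:ℚ) = 0 := by
      simp only [smul_eq_mul, mul_zero, mul_one, zero_sub] at hk
      linarith
    rw [hn, hzero]
  -- Step B
  set f : (Submodule.span ℚ (Γ : Set V)) →ₗ[ℚ] ℚ :=
    (coroot σ).domRestrict (Submodule.span ℚ (Γ : Set V)) - (2:ℚ) • ε with hfdef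
  have hfZ : ∀ x : Submodule.span ℚ (Γ : Set V),
      (x : V) ∈ qCone (Γ : Set V) ∧ ε x = 0 → f x = 0 := by
    rintro x ⟨⟨T, cf, hT, hc, hsum⟩, hx0⟩
    have hxM : x = ∑ t ∈ T.attach,
        cf t.1 • (⟨t.1, hΓM (hT t.2)⟩ : Submodule.span ℚ (Γ : Set V)) := by
      apply Subtype.ext
      rw [hsum, ← Finset.sum_attach T (fun t => cf t • t)]
      push_cast
      rfl
    have hεsum : ∑ t ∈ T.attach, cf t.1 * ε ⟨t.1, hΓM (hT t.2)⟩ = 0 := by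
      rw [← hx0, hxM, map_sum]
      simp only [map_smul, smul_eq_mul]
    have hnn : ∀ t ∈ T.attach, 0 ≤ cf t.1 * ε ⟨t.1, hΓM (hT t.2)⟩ := by
      intro t ht
      obtain ⟨m, hm⟩ := hε.2.2.1 ⟨t.1, hΓM (hT t.2)⟩ (hT t.2)
      have hcnn := hc t.1 t.2
      rw [hm]; positivity
    have hterm := (Finset.sum_eq_zero_iff_of_nonneg hnn).mp hεsum
    rw [hxM, map_sum]
    apply Finset.sum_eq_zero
    intro t ht
    rw [map_smul, smul_eq_mul]
    rcases mul_eq_zero.mp (hterm t ht) with h | h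
    · rw [h, zero_mul]
    · have hco : coroot σ t.1 = 0 := stepA t.1 (hT t.2) h
      have hft : f ⟨t.1, hΓM (hT t.2)⟩ = 0 := by
        rw [hfdef]
        simp [LinearMap.sub_apply, LinearMap.domRestrict_apply, hco, h]
      rw [hft, mul_zero]
  have hσker : f ⟨σ, hσM⟩ = 0 := by
    rw [hfdef]
    simp [LinearMap.sub_apply, LinearMap.domRestrict_apply, hεσ, hself σ hσS]
  have hHker : Submodule.span ℚ
      {x : Submodule.span ℚ (Γ : Set V) | (x : V) ∈ qCone (Γ : Set V) ∧ ε x = 0}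
      ≤ LinearMap.ker f :=
    Submodule.span_le.mpr (fun x hx => LinearMap.mem_ker.mpr (hfZ x hx))
  have hσnotH : (⟨σ, hσM⟩ : Submodule.span ℚ (Γ : Set V)) ∉ Submodule.span ℚ
      {x : Submodule.span ℚ (Γ : Set V) | (x : V) ∈ qCone (Γ : Set V) ∧ ε x = 0} := by
    intro hmem
    have hεH : Submodule.span ℚ
        {x : Submodule.span ℚ (Γ : Set V) | (x : V) ∈ qCone (Γ : Set V) ∧ ε x = 0}
        ≤ LinearMap.ker ε :=
      Submodule.span_le.mpr (fun x hx => LinearMap.mem_ker.mpr hx.2)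
    have h0 := LinearMap.mem_ker.mp (hεH hmem)
    rw [hεσ] at h0
    norm_num at h0
  have hrank := hε.2.2.2
  set K := Submodule.span ℚ
      {x : Submodule.span ℚ (Γ : Set V) | (x : V) ∈ qCone (Γ : Set V) ∧ ε x = 0}
      ⊔ Submodule.span ℚ {(⟨σ, hσM⟩ : Submodule.span ℚ (Γ : Set V))} with hKdef
  have hlt : Submodule.span ℚ
      {x : Submodule.span ℚ (Γ : Set V) | (x : V) ∈ qCone (Γ : Set V) ∧ ε x = 0} < K := by
    refine lt_of_le_of_ne le_sup_left (fun heq => hσnotH ?_)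
    rw [heq]
    exact SetLike.le_def.mp le_sup_right (Submodule.mem_span_singleton_self _)
  have hfin : Module.finrank ℚ (Submodule.span ℚ (Γ : Set V)) ≤ Module.finrank ℚ K := by
    have h1 := Submodule.finrank_lt_finrank_of_lt hlt
    omega
  have hKtop : K = ⊤ :=
    Submodule.eq_top_of_finrank_eq (le_antisymm (Submodule.finrank_le K) hfin)
  have hKker : K ≤ LinearMap.ker f :=
    sup_le hHker ((Submodule.span_singleton_le_iff_mem _ _).mpr (LinearMap.mem_ker.mpr hσker))
  have hf0 : f = 0 := LinearMap.ker_eq_top.mp (top_unique (hKtop ▸ hKker))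
  rw [hfdef] at hf0
  exact sub_eq_zero.mp hf0

/-- if `Γ` is a `G`-saturated submonoid of `Λ⁺` (i.e. `ℤΓ ∩ Λ⁺ = Γ`),
then for every simple root `σ ∈ S` with `σ ∈ ℤΓ` the set `a(σ)` has at most one element. -/
theorem aset_subsingleton_of_saturated
    {V : Type*} [AddCommGroup V] [Module ℚ V] [FiniteDimensional ℚ V]
    (S : Finset V) (coroot : V → V →ₗ[ℚ] ℚ) (Λ : AddSubgroup V)
    -- context: simple roots lie in `Λ` (since `ℤΦ ⊆ Λ`)
    (hSΛ : ∀ α ∈ S, α ∈ Λ)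
    -- context: pairings of coroots with elements of the weight lattice are integers
    (hint : ∀ α ∈ S, ∀ lam ∈ Λ, ∃ n : ℤ, coroot α lam = n)
    -- context: `⟨α^∨, α⟩ = 2` for every (simple) root
    (hself : ∀ α ∈ S, coroot α α = 2)
    -- context: `⟨α^∨, β⟩ ≤ 0` for distinct simple roots `α, β`
    (hoffdiag : ∀ α ∈ S, ∀ β ∈ S, α ≠ β → coroot α β ≤ 0)
    (Γ : AddSubmonoid V)
    -- `Γ` is a submonoid of `Λ⁺`
    (hΓdom : (Γ : Set V) ⊆ dominant S coroot Λ)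
    -- `Γ` is `G`-saturated: `ℤΓ ∩ Λ⁺ = Γ`
    (hsat : (AddSubgroup.closure (Γ : Set V) : Set V) ∩ dominant S coroot Λ = (Γ : Set V))
    (σ : V) (hσS : σ ∈ S) (hσZ : σ ∈ AddSubgroup.closure (Γ : Set V)) :
    (aset Γ coroot σ).Subsingleton := by
  
  have hΓM : (Γ : Set V) ⊆ (Submodule.span ℚ (Γ : Set V) : Set V) := Submodule.subset_span
  have hσM : σ ∈ Submodule.span ℚ (Γ : Set V) := by
    have hle : AddSubgroup.closure (Γ : Set V) ≤ (Submodule.span ℚ (Γ : Set V)).toAddSubgroup :=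
      (AddSubgroup.closure_le _).mpr hΓM
    exact hle hσZ
  have key : ∀ δ ∈ aset Γ coroot σ,
      (2:ℚ) • δ = (coroot σ).domRestrict (Submodule.span ℚ (Γ : Set V)) := by
    intro δ hδ
    obtain ⟨h1, h2, h3⟩ := hδ
    have hδσ : δ ⟨σ, hσM⟩ = 1 := h2 _ rfl
    rcases h3 with h | h
    · have := coroot_eq_two_smul S coroot Λ hint hself hoffdiag Γ hΓdom hsat σ hσS hσZ hσM δ h hδσ
      rw [this]
    · have hεσ : ((coroot σ).domRestrict (Submodule.span ℚ (Γ : Set V)) - δ) ⟨σ, hσM⟩ = 1 := by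
        rw [LinearMap.sub_apply, LinearMap.domRestrict_apply, hself σ hσS, hδσ]
        norm_num
      have h2e := coroot_eq_two_smul S coroot Λ hint hself hoffdiag Γ hΓdom hsat σ hσS hσZ hσM _ h hεσ
      rw [smul_sub] at h2e
      have h3' := eq_sub_iff_add_eq.mp h2e
      rw [two_smul ℚ ((coroot σ).domRestrict (Submodule.span ℚ (Γ : Set V)))] at h3'
      exact (add_left_cancel h3')
  intro δ₁ h₁ δ₂ h₂
  have e1 := key δ₁ h₁
  have e2 := key δ₂ h₂
  exact smul_right_injective _ (two_ne_zero) (e1.trans e2.symm)
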